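/- For every natural number n ≥ 4, the infinite product ∏_{k≥1} (1 - 1/2^(k·n)) is at least 1 - 1/n. -/

import Mathlib

/-!
By the Weierstrass product inequality `∏ (1 - aₖ) ≥ 1 - ∑ aₖ` for `0 ≤ aₖ ≤ 1`, the product is at
least `1 - ∑_{k ≥ 1} 2^{-kn} = 1 - 1/(2ⁿ - 1)`, and `2ⁿ - 1 ≥ n`.
-/

theorem Finset.one_sub_sum_le_prod_one_sub {ι R : Type*} [CommRing R] [LinearOrder R]
    [IsStrictOrderedRing R] (s : Finset ι) {a : ι → R} (h0 : ∀ i ∈ s, 0 ≤ a i)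
    (h1 : ∀ i ∈ s, a i ≤ 1) : 1 - ∑ i ∈ s, a i ≤ ∏ i ∈ s, (1 - a i) := by
  induction s using Finset.cons_induction with
  | empty => simp
  | cons j s _ ih =>
    simp only [Finset.mem_cons, forall_eq_or_imp] at h0 h1
    rw [Finset.prod_cons, Finset.sum_cons]
    have hsum : 0 ≤ ∑ i ∈ s, a i := Finset.sum_nonneg h0.2
    nlinarith [ih h0.2 h1.2, h0.1, h1.1]

theorem Real.one_sub_tsum_le_tprod_one_sub {ι : Type*} {a : ι → ℝ} (ha : Summable a)
    (h0 : ∀ i, 0 ≤ a i) (h1 : ∀ i, a i ≤ 1) : 1 - ∑' i, a i ≤ ∏' i, (1 - a i) := by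
  have hmul : Multipliable fun i ↦ 1 - a i := by
    simpa only [← sub_eq_add_neg] using Real.multipliable_one_add_of_summable ha.neg
  refine ge_of_tendsto' hmul.hasProd fun s ↦ ?_
  calc 1 - ∑' i, a i ≤ 1 - ∑ i ∈ s, a i := by
        gcongr
        exact ha.sum_le_tsum s fun i _ ↦ h0 i
    _ ≤ ∏ i ∈ s, (1 - a i) :=
        s.one_sub_sum_le_prod_one_sub (fun i _ ↦ h0 i) fun i _ ↦ h1 i

theorem hasSum_pow_succ_of_lt_one {r : ℝ} (h0 : 0 ≤ r) (h1 : r < 1) :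
    HasSum (fun k : ℕ ↦ r ^ (k + 1)) (r / (1 - r)) := by
  simpa only [← pow_succ', div_eq_mul_inv] using (hasSum_geometric_of_lt_one h0 h1).mul_left r

theorem hasSum_one_div_pow_succ_mul {b : ℝ} (hb : 1 < b) {n : ℕ} (hn : n ≠ 0) :
    HasSum (fun k : ℕ ↦ 1 / b ^ ((k + 1) * n)) (1 / (b ^ n - 1)) := by
  have hbn : 1 < b ^ n := one_lt_pow₀ hb hn
  have hr0 : 0 ≤ 1 / b ^ n := by positivity
  have hr1 : 1 / b ^ n < 1 := (div_lt_one (by positivity)).2 hbn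
  convert hasSum_pow_succ_of_lt_one hr0 hr1 using 1
  · ext k
    rw [one_div_pow, mul_comm, pow_mul]
  · field_simp

theorem one_div_two_pow_sub_one_le_one_div (n : ℕ) :
    1 / (2 ^ n - 1 : ℝ) ≤ 1 / n := by
  rcases n.eq_zero_or_pos with rfl | hn
  · simp
  have h : (n : ℝ) + 1 ≤ 2 ^ n := by exact_mod_cast Nat.lt_two_pow_self
  exact one_div_le_one_div_of_le (by exact_mod_cast hn) (by linarith)

theorem stmt_3 (n : ℕ) (hn : 4 ≤ n) :
    (∏' k : ℕ, (1 - 1 / 2 ^ ((k + 1) * n) : ℝ)) ≥ 1 - 1 / (n : ℝ) := by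
  have hsum := hasSum_one_div_pow_succ_mul one_lt_two (show n ≠ 0 by omega)
  calc 1 - 1 / (n : ℝ) ≤ 1 - 1 / (2 ^ n - 1) :=
        sub_le_sub_left (one_div_two_pow_sub_one_le_one_div n) 1
    _ = 1 - ∑' k : ℕ, 1 / (2 : ℝ) ^ ((k + 1) * n) := by rw [hsum.tsum_eq]
    _ ≤ ∏' k : ℕ, (1 - 1 / 2 ^ ((k + 1) * n) : ℝ) :=
        Real.one_sub_tsum_le_tprod_one_sub hsum.summable (fun k ↦ by positivity)
          fun k ↦ div_le_one_of_le₀ (one_le_pow₀ one_le_two) (by positivity)
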